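/- Any positive, negative, or flat Hermitian holomorphic vector bundle (F, h, ∂̄_F) over a factorisable irreducible CQH-Kähler space is Hermite–Einstein: its Chern connection ∇ satisfies Λ_F ∘ ∇² = γ i id_F for some γ ∈ ℝ, where Λ_F := Λ ⊗ id_F is the dual Lefschetz operator twisted by F. -/

import Mathlib

/-!
Common framework: noncommutative Kähler structures on quantum homogeneous spaces,
following Ó Buachalla et al., "Positive line bundles over the irreducible quantum
flag manifolds".  We axiomatise compact quantum homogeneous (CQH) Hermitian/Kähler
spaces, relative Hopf modules, covariant (line) bundles, (0,1)-connections,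
Hermitian metrics, Chern connections and curvature.
-/

open scoped TensorProduct

noncomputable section

namespace NCK

variable (A : Type) [Ring A] [HopfAlgebra ℂ A] [StarRing A]
variable (H : Type) [Ring H] [HopfAlgebra ℂ H] [StarRing H]
variable (π : A →ₐc[ℂ] H)

/-- The homogeneous right `H`-coaction `Δ_R = (id ⊗ π) ∘ Δ`, as an algebra map. -/
def deltaR : A →ₐ[ℂ] A ⊗[ℂ] H :=
  (Algebra.TensorProduct.map (AlgHom.id ℂ A) (π : A →ₐ[ℂ] H)).comp (Bialgebra.comulAlgHom ℂ A)

/-- The quantum homogeneous space `B = A^{co(H)}` of right `H`-coinvariant elements. -/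
def coinv : Subalgebra ℂ A :=
  AlgHom.equalizer (deltaR A H π)
    (Algebra.TensorProduct.includeLeft : A →ₐ[ℂ] A ⊗[ℂ] H)

/-- `B⁺ = B ∩ ker ε`. -/
def Bplus : Set ↥(coinv A H π) :=
  {b | Coalgebra.counit (R := ℂ) (b : A) = 0}

/-- Left- and right-invariance of a functional (Haar functional conditions). -/
def haarInv (R : Type) [Ring R] [HopfAlgebra ℂ R] (h : R →ₗ[ℂ] ℂ) : Prop :=
  (∀ a : R, (TensorProduct.rid ℂ R)
      ((TensorProduct.map LinearMap.id h) (Coalgebra.comul (R := ℂ) a)) = h a • (1 : R)) ∧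
  (∀ a : R, (TensorProduct.lid ℂ R)
      ((TensorProduct.map h LinearMap.id) (Coalgebra.comul (R := ℂ) a)) = h a • (1 : R))

/-- A compact quantum group algebra: a cosemisimple Hopf ∗-algebra (cosemisimplicity is
encoded by the existence and uniqueness of a normalised two-sided invariant Haar functional)
whose Haar functional is positive, i.e. `h(a^* a) > 0` for nonzero `a`. -/
structure IsCQGA (R : Type) [Ring R] [HopfAlgebra ℂ R] [StarRing R] : Prop where
  haar_exists_unique : ∃! h : R →ₗ[ℂ] ℂ, h 1 = 1 ∧ haarInv R h
  haar_pos : ∀ h : R →ₗ[ℂ] ℂ, h 1 = 1 ∧ haarInv R h →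
    ∀ a : R, a ≠ 0 → ∃ r : ℝ, 0 < r ∧ h (star a * a) = (r : ℂ)
  star_comul : ∀ S : R ⊗[ℂ] R →+ R ⊗[ℂ] R,
    (∀ x y : R, S (x ⊗ₜ y) = star x ⊗ₜ star y) →
    ∀ a : R, Coalgebra.comul (R := ℂ) (star a) = S (Coalgebra.comul (R := ℂ) a)
  star_counit : ∀ a : R, Coalgebra.counit (R := ℂ) (star a) =
    starRingEnd ℂ (Coalgebra.counit (R := ℂ) a)
  antipode_star : ∀ a : R,
    HopfAlgebra.antipode (R := ℂ) (star (HopfAlgebra.antipode (R := ℂ) (star a))) = a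

/-- A compact quantum homogeneous (CQH) Hermitian space
`(B = A^{co(H)}, Ω•, Ω^{(•,•)}, σ)`:  a left `A`-covariant differential ∗-calculus `Ω•`
over the CQGA-homogeneous space `B`, of even total degree `2n`, finitely generated as a
relative Hopf module, together with a covariant complex structure `Ω^{(a,b)}` and a
central, real, coinvariant Hermitian `(1,1)`-form `σ` whose Lefschetz operator induces
the Lefschetz isomorphisms, whose Hodge map (defined by the Weil formula on primitive
forms) yields a positive definite metric, and whose integral `∫ = h ∘ ∗_σ` is closed. -/
structure CQH where
  /-- the total space `Ω•` of the differential calculus (an algebra containing `B = Ω^0`) -/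
  Om : Type
  [ringOm : Ring Om]
  [algOm : Algebra ℂ Om]
  /-- half the total degree: `Ω•` has total degree `2n` -/
  n : ℕ
  npos : 0 < n
  /-- the `(a,b)`-forms `Ω^{(a,b)}` -/
  grade : ℕ → ℕ → Submodule ℂ Om
  /-- the inclusion of `B = A^{co(H)}` as `Ω^{(0,0)}` -/
  incl : ↥(coinv A H π) →ₐ[ℂ] Om
  incl_inj : Function.Injective incl
  incl_range : ∀ ω : Om, ω ∈ grade 0 0 ↔ ∃ b, incl b = ω
  grade_mul : ∀ (a b c e : ℕ) (ω ν : Om), ω ∈ grade a b → ν ∈ grade c e →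
    ω * ν ∈ grade (a + c) (b + e)
  grade_bot : ∀ a b : ℕ, 2 * n < a + b → grade a b = ⊥
  /-- the projections `Ω• → Ω^{(a,b)}` of the `ℕ₀²`-grading -/
  proj : ℕ → ℕ → Om →ₗ[ℂ] Om
  proj_mem : ∀ a b ω, proj a b ω ∈ grade a b
  proj_of_mem : ∀ a b ω, ω ∈ grade a b → proj a b ω = ω
  proj_of_ne : ∀ a b a' b' ω, (a, b) ≠ (a', b') → ω ∈ grade a' b' → proj a b ω = 0
  proj_sum : ∀ ω : Om,
    (∑ p ∈ Finset.range (2 * n + 1) ×ˢ Finset.range (2 * n + 1), proj p.1 p.2 ω) = ω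
  proj_bimod_l : ∀ a b (c : ↥(coinv A H π)) ω, proj a b (incl c * ω) = incl c * proj a b ω
  proj_bimod_r : ∀ a b (c : ↥(coinv A H π)) ω, proj a b (ω * incl c) = proj a b ω * incl c
  /-- the exterior derivative -/
  d : Om →ₗ[ℂ] Om
  d_sq : ∀ ω, d (d ω) = 0
  d_leibniz : ∀ (k : ℕ) (ω ν : Om), (ω ∈ ⨆ a : Fin (k + 1), grade a (k - a)) →
    d (ω * ν) = d ω * ν + ((-1 : ℤ) ^ k) • (ω * d ν)
  /-- integrability of the almost complex structure: `d Ω^{(a,b)} ⊆ Ω^{(a+1,b)} ⊕ Ω^{(a,b+1)}` -/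
  d_grade : ∀ a b ω, ω ∈ grade a b → d ω ∈ grade (a + 1) b ⊔ grade a (b + 1)
  /-- `Ω•` is generated as a dg-algebra in degree `0` -/
  generated : Algebra.adjoin ℂ (Set.range incl ∪ d '' Set.range incl) = ⊤
  /-- the ∗-structure of the differential ∗-calculus -/
  ostar : Om → Om
  ostar_add : ∀ ω ν, ostar (ω + ν) = ostar ω + ostar ν
  ostar_smul : ∀ (c : ℂ) ω, ostar (c • ω) = starRingEnd ℂ c • ostar ω
  ostar_invol : ∀ ω, ostar (ostar ω) = ω
  ostar_mul : ∀ (k l : ℕ) (ω ν : Om), (ω ∈ ⨆ a : Fin (k + 1), grade a (k - a)) →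
    (ν ∈ ⨆ a : Fin (l + 1), grade a (l - a)) →
    ostar (ω * ν) = ((-1 : ℤ) ^ (k * l)) • (ostar ν * ostar ω)
  ostar_d : ∀ ω, ostar (d ω) = d (ostar ω)
  ostar_grade : ∀ a b ω, ω ∈ grade a b → ostar ω ∈ grade b a
  /-- the ∗-structure of `B` (inherited from `A`) -/
  Bstar : ↥(coinv A H π) → ↥(coinv A H π)
  Bstar_spec : ∀ b, (Bstar b : A) = star (b : A)
  ostar_incl : ∀ b, ostar (incl b) = incl (Bstar b)
  /-- the left `A`-coaction making `Ω•` a covariant calculus -/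
  coact : Om →ₐ[ℂ] A ⊗[ℂ] Om
  coact_coassoc : ∀ ω : Om,
    (TensorProduct.assoc ℂ A A Om)
      ((TensorProduct.map (Coalgebra.comul (R := ℂ)) LinearMap.id) (coact ω)) =
    (TensorProduct.map LinearMap.id coact.toLinearMap) (coact ω)
  coact_counit : ∀ ω : Om,
    (TensorProduct.lid ℂ Om)
      ((TensorProduct.map (Coalgebra.counit (R := ℂ)) LinearMap.id) (coact ω)) = ω
  coact_d : ∀ ω, coact (d ω) = (TensorProduct.map LinearMap.id d) (coact ω)
  coact_grade : ∀ a b ω, ω ∈ grade a b →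
    coact ω ∈ LinearMap.range (TensorProduct.map (LinearMap.id (M := A)) (grade a b).subtype)
  /-- the restriction of the comultiplication of `A` to a coaction on `B` -/
  coactB : ↥(coinv A H π) →ₗ[ℂ] A ⊗[ℂ] ↥(coinv A H π)
  coactB_spec : ∀ b,
    (TensorProduct.map LinearMap.id (Subalgebra.toSubmodule (coinv A H π)).subtype) (coactB b) =
      Coalgebra.comul (R := ℂ) (b : A)
  coact_incl : ∀ b, coact (incl b) = (TensorProduct.map LinearMap.id incl.toLinearMap) (coactB b)
  /-- `A` and `H` are compact quantum group algebras and `π` is a surjective Hopf ∗-algebra map -/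
  cqgaA : IsCQGA A
  cqgaH : IsCQGA H
  π_surj : Function.Surjective π
  π_star : ∀ a : A, π (star a) = star (π a)
  /-- `Ω•` is finitely generated as a left `B`-module -/
  fingen : ∃ s : Finset Om, ∀ ω : Om,
    ω ∈ Submodule.span ℂ {x | ∃ (b : ↥(coinv A H π)) (g : Om), g ∈ s ∧ x = incl b * g}
  /-- `Ω•` is an object of `^A_B mod₀`, i.e. `B⁺Ω = ΩB⁺` -/
  mod0 : Submodule.span ℂ {x : Om | ∃ b ∈ Bplus A H π, ∃ ω : Om, x = incl b * ω}
       = Submodule.span ℂ {x : Om | ∃ b ∈ Bplus A H π, ∃ ω : Om, x = ω * incl b}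
  /-- the Hermitian form -/
  σ : Om
  σ_grade : σ ∈ grade 1 1
  σ_central : ∀ ω, σ * ω = ω * σ
  σ_real : ostar σ = σ
  σ_coinv : coact σ = 1 ⊗ₜ σ
  /-- the Lefschetz isomorphisms `L^{n-k} : Ω^k → Ω^{2n-k}` -/
  lef : ∀ k : ℕ, k < n → ∀ ω' : Om, (ω' ∈ ⨆ a : Fin (2 * n - k + 1), grade a (2 * n - k - a)) →
    ∃! ω : Om, (ω ∈ ⨆ a : Fin (k + 1), grade a (k - a)) ∧ σ ^ (n - k) * ω = ω'
  /-- the Hodge map `∗_σ` -/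
  hodge : Om →ₗ[ℂ] Om
  hodge_bij : Function.Bijective hodge
  hodge_grade : ∀ a b ω, ω ∈ grade a b → hodge ω ∈ grade (n - b) (n - a)
  hodge_bimod_l : ∀ (b : ↥(coinv A H π)) ω, hodge (incl b * ω) = incl b * hodge ω
  hodge_bimod_r : ∀ (b : ↥(coinv A H π)) ω, hodge (ω * incl b) = hodge ω * incl b
  /-- the Weil formula: for a primitive `(a,b)`-form `α`,
  `∗_σ(L^j α) = (-1)^{k(k+1)/2} i^{a-b} (j!/(n-j-k)!) L^{n-j-k} α` where `k = a + b` -/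
  hodge_weil : ∀ (a b j : ℕ) (α : Om), α ∈ grade a b → a + b + j ≤ n →
    σ ^ (n - (a + b) + 1) * α = 0 →
    hodge (σ ^ j * α) =
      (((-1 : ℂ) ^ ((a + b) * (a + b + 1) / 2)) * Complex.I ^ ((a : ℤ) - (b : ℤ)) *
        ((Nat.factorial j : ℂ) / (Nat.factorial (n - j - (a + b)) : ℂ))) •
          (σ ^ (n - j - (a + b)) * α)
  /-- positive definiteness of the metric `g_σ(ω,ν) = ∗_σ(ω ∧ ∗_σ(ν^*))`:
  for every nonzero `ω`, `g_σ(ω,ω)` is a nonzero positive element of `B` -/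
  metric_pos : ∀ ω : Om, ω ≠ 0 →
    (∃ (m : ℕ) (c : Fin m → ↥(coinv A H π)),
      (∑ k ∈ Finset.range (2 * n + 1),
        hodge (((∑ a ∈ Finset.range (k + 1), proj a (k - a)) ω) *
          hodge (ostar ((∑ a ∈ Finset.range (k + 1), proj a (k - a)) ω))))
        = ∑ i, incl (Bstar (c i)) * incl (c i)) ∧
    (∑ k ∈ Finset.range (2 * n + 1),
        hodge (((∑ a ∈ Finset.range (k + 1), proj a (k - a)) ω) *
          hodge (ostar ((∑ a ∈ Finset.range (k + 1), proj a (k - a)) ω)))) ≠ 0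
  /-- closedness of the integral `∫ = h ∘ ∗_σ` -/
  integral_closed : ∀ ω : Om, (ω ∈ ⨆ a : Fin (2 * n), grade a (2 * n - 1 - a)) →
    ∀ b : ↥(coinv A H π), incl b = hodge (d ω) →
    ∀ h : A →ₗ[ℂ] ℂ, h 1 = 1 ∧ haarInv A h → h (b : A) = 0

attribute [instance] CQH.ringOm CQH.algOm

variable {A H π}

namespace CQH

variable (K : CQH A H π)

/-- The degree-`k` forms `Ω^k = ⊕_{a+b=k} Ω^{(a,b)}`. -/
def Omdeg (k : ℕ) : Submodule ℂ K.Om :=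
  ⨆ a : Fin (k + 1), K.grade a (k - a)

/-- The projection onto degree-`k` forms. -/
def projdeg (k : ℕ) : K.Om →ₗ[ℂ] K.Om :=
  ∑ a ∈ Finset.range (k + 1), K.proj a (k - a)

/-- The metric `g_σ` determined by the Hodge map via
`g_σ(ω,ν) = Σ_k ∗_σ((ω)_k ∧ ∗_σ(((ν)_k)^*))`. -/
def gmap (ω ν : K.Om) : K.Om :=
  ∑ k ∈ Finset.range (2 * K.n + 1),
    K.hodge (K.projdeg k ω * K.hodge (K.ostar (K.projdeg k ν)))

/-- The Hodge map as a linear equivalence. -/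
def hodgeEquiv : K.Om ≃ₗ[ℂ] K.Om := LinearEquiv.ofBijective K.hodge K.hodge_bij

/-- The dual Lefschetz operator `Λ = ∗_σ⁻¹ ∘ L ∘ ∗_σ`. -/
def lam : K.Om →ₗ[ℂ] K.Om :=
  (K.hodgeEquiv.symm : K.Om →ₗ[ℂ] K.Om) ∘ₗ LinearMap.mulLeft ℂ K.σ ∘ₗ K.hodge

lemma lam_apply (ω : K.Om) : K.lam ω = K.hodgeEquiv.symm (K.σ * K.hodge ω) := rfl

lemma hodge_symm_apply (y : K.Om) : K.hodge (K.hodgeEquiv.symm y) = y := by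
  have := K.hodgeEquiv.apply_symm_apply y
  simpa [hodgeEquiv, LinearEquiv.ofBijective_apply] using this

lemma lam_right (b : ↥(coinv A H π)) (ω : K.Om) :
    K.lam (ω * K.incl b) = K.lam ω * K.incl b := by
  apply K.hodge_bij.injective
  calc K.hodge (K.lam (ω * K.incl b))
      = K.σ * K.hodge (ω * K.incl b) := by rw [lam_apply, hodge_symm_apply]
    _ = (K.σ * K.hodge ω) * K.incl b := by rw [K.hodge_bimod_r, mul_assoc]
    _ = K.hodge (K.lam ω) * K.incl b := by rw [lam_apply, hodge_symm_apply]
    _ = K.hodge (K.lam ω * K.incl b) := (K.hodge_bimod_r _ _).symm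

end CQH

variable (K : CQH A H π)

/-- A covariant vector bundle over `B`, i.e. an object of `^A_B mod₀`:
a finitely generated projective relative Hopf module. -/
structure VecBundle where
  E : Type
  [acg : AddCommGroup E]
  [modC : Module ℂ E]
  [modB : Module ↥(coinv A H π) E]
  [tower : IsScalarTower ℂ ↥(coinv A H π) E]
  [scomm : SMulCommClass ℂ ↥(coinv A H π) E]
  projective : Module.Projective ↥(coinv A H π) E
  fingen : ∃ s : Finset E, ∀ e : E,
    e ∈ Submodule.span ℂ {x | ∃ (b : ↥(coinv A H π)) (g : E), g ∈ s ∧ x = b • g}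
  /-- the right `B`-module structure -/
  rmul : ↥(coinv A H π) →ₗ[ℂ] E →ₗ[ℂ] E
  rmul_one : rmul 1 = LinearMap.id
  rmul_mul : ∀ b c, rmul (b * c) = (rmul c).comp (rmul b)
  rmul_smul_comm : ∀ (b c : ↥(coinv A H π)) e, rmul c (b • e) = b • rmul c e
  /-- the left `A`-coaction -/
  coact : E →ₗ[ℂ] A ⊗[ℂ] E
  coact_coassoc : ∀ e : E,
    (TensorProduct.assoc ℂ A A E)
      ((TensorProduct.map (Coalgebra.comul (R := ℂ)) LinearMap.id) (coact e)) =
    (TensorProduct.map LinearMap.id coact) (coact e)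
  coact_counit : ∀ e : E,
    (TensorProduct.lid ℂ E)
      ((TensorProduct.map (Coalgebra.counit (R := ℂ)) LinearMap.id) (coact e)) = e
  coact_smul : ∀ (b : ↥(coinv A H π)) (e : E)
      (l : List (A × E)) (lb : List (A × ↥(coinv A H π))),
    coact e = (l.map fun p => p.1 ⊗ₜ p.2).sum →
    K.coactB b = (lb.map fun p => p.1 ⊗ₜ p.2).sum →
    coact (b • e) = (lb.map fun pb => (l.map fun p =>
      (pb.1 * p.1) ⊗ₜ[ℂ] (pb.2 • p.2)).sum).sum
  coact_rmul : ∀ (b : ↥(coinv A H π)) (e : E)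
      (l : List (A × E)) (lb : List (A × ↥(coinv A H π))),
    coact e = (l.map fun p => p.1 ⊗ₜ p.2).sum →
    K.coactB b = (lb.map fun p => p.1 ⊗ₜ p.2).sum →
    coact (rmul b e) = (l.map fun p => (lb.map fun pb =>
      (p.1 * pb.1) ⊗ₜ[ℂ] (rmul pb.2 p.2)).sum).sum
  /-- the `mod₀` condition `B⁺E = EB⁺` -/
  mod0 : Submodule.span ℂ {x : E | ∃ b ∈ Bplus A H π, ∃ e : E, x = b • e}
       = Submodule.span ℂ {x : E | ∃ b ∈ Bplus A H π, ∃ e : E, x = rmul b e}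

attribute [instance] VecBundle.acg VecBundle.modC VecBundle.modB VecBundle.tower VecBundle.scomm

/-- A covariant line bundle over `B`: a covariant vector bundle `E` with `dim Φ(E) = 1`,
where `Φ(E) = E / B⁺E` is Takeuchi's functor. -/
structure LineBundle where
  V : VecBundle K
  line : Module.finrank ℂ
    (V.E ⧸ Submodule.span ℂ {x : V.E | ∃ b ∈ Bplus A H π, ∃ e : V.E, x = b • e}) = 1

variable {K}

/-- The `B`-balancing relations inside `Ω• ⊗_ℂ E`. -/
def bal (V : VecBundle K) : Submodule ℂ (K.Om ⊗[ℂ] V.E) :=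
  Submodule.span ℂ {x | ∃ (ω : K.Om) (b : ↥(coinv A H π)) (e : V.E),
    x = (ω * K.incl b) ⊗ₜ e - ω ⊗ₜ (b • e)}

/-- The tensor product `Ω• ⊗_B E`. -/
def TB (V : VecBundle K) := (K.Om ⊗[ℂ] V.E) ⧸ bal V

instance (V : VecBundle K) : AddCommGroup (TB V) :=
  inferInstanceAs (AddCommGroup ((K.Om ⊗[ℂ] V.E) ⧸ bal V))
instance (V : VecBundle K) : Module ℂ (TB V) :=
  inferInstanceAs (Module ℂ ((K.Om ⊗[ℂ] V.E) ⧸ bal V))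

/-- The canonical projection `Ω• ⊗_ℂ E → Ω• ⊗_B E`. -/
def mkT (V : VecBundle K) : K.Om ⊗[ℂ] V.E →ₗ[ℂ] TB V := (bal V).mkQ

/-- Auxiliary: left multiplication by a form on the first tensor factor. -/
def omActAux (V : VecBundle K) (ω₀ : K.Om) : K.Om ⊗[ℂ] V.E →ₗ[ℂ] K.Om ⊗[ℂ] V.E :=
  TensorProduct.map (LinearMap.mulLeft ℂ ω₀) LinearMap.id

lemma omAct_bal (V : VecBundle K) (ω₀ : K.Om) :
    bal V ≤ (bal V).comap (omActAux V ω₀) := by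
  rw [← Submodule.map_le_iff_le_comap, bal, Submodule.map_span]
  refine Submodule.span_le.mpr ?_
  rintro x ⟨y, ⟨ω, b, e, rfl⟩, rfl⟩
  refine Submodule.subset_span ⟨ω₀ * ω, b, e, ?_⟩
  simp [omActAux, TensorProduct.map_tmul, mul_assoc]

/-- Left multiplication by `ω₀ ∈ Ω•` on `Ω• ⊗_B E`; for `ω₀ = ι(b)` this is the left
`B`-module structure of `Ω• ⊗_B E`. -/
def omAct (V : VecBundle K) (ω₀ : K.Om) : TB V →ₗ[ℂ] TB V :=
  Submodule.mapQ _ _ (omActAux V ω₀) (omAct_bal V ω₀)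

/-- Auxiliary: the projection `proj a b ⊗ id`. -/
def projActAux (V : VecBundle K) (a b : ℕ) : K.Om ⊗[ℂ] V.E →ₗ[ℂ] K.Om ⊗[ℂ] V.E :=
  TensorProduct.map (K.proj a b) LinearMap.id

lemma projAct_bal (V : VecBundle K) (a b : ℕ) :
    bal V ≤ (bal V).comap (projActAux V a b) := by
  rw [← Submodule.map_le_iff_le_comap, bal, Submodule.map_span]
  refine Submodule.span_le.mpr ?_
  rintro x ⟨y, ⟨ω, c, e, rfl⟩, rfl⟩
  refine Submodule.subset_span ⟨K.proj a b ω, c, e, ?_⟩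
  simp [projActAux, TensorProduct.map_tmul, K.proj_bimod_r]

/-- The projection `proj_{Ω^{(a,b)}} ⊗ id : Ω• ⊗_B E → Ω• ⊗_B E`. -/
def projAct (V : VecBundle K) (a b : ℕ) : TB V →ₗ[ℂ] TB V :=
  Submodule.mapQ _ _ (projActAux V a b) (projAct_bal V a b)

/-- Auxiliary: `Λ ⊗ id`. -/
def lamActAux (V : VecBundle K) : K.Om ⊗[ℂ] V.E →ₗ[ℂ] K.Om ⊗[ℂ] V.E :=
  TensorProduct.map K.lam LinearMap.id

lemma lamAct_bal (V : VecBundle K) :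
    bal V ≤ (bal V).comap (lamActAux V) := by
  rw [← Submodule.map_le_iff_le_comap, bal, Submodule.map_span]
  refine Submodule.span_le.mpr ?_
  rintro x ⟨y, ⟨ω, c, e, rfl⟩, rfl⟩
  refine Submodule.subset_span ⟨K.lam ω, c, e, ?_⟩
  simp [lamActAux, TensorProduct.map_tmul, K.lam_right]

/-- The twisted dual Lefschetz operator `Λ_E = Λ ⊗ id` on `Ω• ⊗_B E`. -/
def lamAct (V : VecBundle K) : TB V →ₗ[ℂ] TB V :=
  Submodule.mapQ _ _ (lamActAux V) (lamAct_bal V)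

/-- The canonical left `A`-coaction on `Ω• ⊗_ℂ E`. -/
def coactT0 (V : VecBundle K) : K.Om ⊗[ℂ] V.E →ₗ[ℂ] A ⊗[ℂ] (K.Om ⊗[ℂ] V.E) :=
  (TensorProduct.map (LinearMap.mul' ℂ A) LinearMap.id) ∘ₗ
    (TensorProduct.tensorTensorTensorComm ℂ A K.Om A V.E).toLinearMap ∘ₗ
    (TensorProduct.map K.coact.toLinearMap V.coact)

/-- A covariant `(0,1)`-connection `∂̄_E : E → Ω^{(0,1)} ⊗_B E`. -/
structure Conn01 (V : VecBundle K) where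
  D : V.E →ₗ[ℂ] TB V
  /-- the Leibniz rule `∂̄_E(be) = ∂̄b ⊗ e + b ∂̄_E(e)` -/
  leibniz : ∀ (b : ↥(coinv A H π)) (e : V.E),
    D (b • e) = mkT V ((K.proj 0 1 (K.d (K.incl b))) ⊗ₜ e) + omAct V (K.incl b) (D e)
  /-- `∂̄_E` takes values in `Ω^{(0,1)} ⊗_B E` -/
  mem01 : ∀ e, D e ∈ Submodule.span ℂ
    {x | ∃ ω ∈ K.grade 0 1, ∃ e' : V.E, x = mkT V (ω ⊗ₜ e')}
  /-- the induced coaction on `Ω• ⊗_B E` -/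
  coactTB : TB V →ₗ[ℂ] A ⊗[ℂ] TB V
  coactTB_spec : ∀ x, coactTB (mkT V x) = (TensorProduct.map LinearMap.id (mkT V)) (coactT0 V x)
  /-- covariance: `∂̄_E` is a left `A`-comodule map -/
  covariant : ∀ e, coactTB (D e) = (TensorProduct.map LinearMap.id D) (V.coact e)

/-- A connection `∇ : E → Ω¹ ⊗_B E`. -/
structure Conn1 (V : VecBundle K) where
  D : V.E →ₗ[ℂ] TB V
  leibniz : ∀ (b : ↥(coinv A H π)) (e : V.E),
    D (b • e) = mkT V ((K.d (K.incl b)) ⊗ₜ e) + omAct V (K.incl b) (D e)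
  mem1 : ∀ e, D e ∈ Submodule.span ℂ
    {x | ∃ ω ∈ K.grade 1 0 ⊔ K.grade 0 1, ∃ e' : V.E, x = mkT V (ω ⊗ₜ e')}

/-- A covariant Hermitian metric on a covariant vector bundle. -/
structure HermMetric (V : VecBundle K) where
  h : V.E → V.E → ↥(coinv A H π)
  add_left : ∀ e e' f, h (e + e') f = h e f + h e' f
  smul_left : ∀ (c : ℂ) e f, h (c • e) f = c • h e f
  conj_symm : ∀ e f, h e f = K.Bstar (h f e)
  bmod_left : ∀ (b : ↥(coinv A H π)) e f, h (b • e) f = b * h e f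
  /-- positivity: `h(e,e) ∈ B_{>0}` for `e ≠ 0` -/
  pos : ∀ e : V.E, e ≠ 0 →
    (∃ (m : ℕ) (c : Fin m → ↥(coinv A H π)), h e e = ∑ i, K.Bstar (c i) * c i) ∧ h e e ≠ 0
  /-- the pairing is perfect: `ē ↦ h(·,e)` identifies the conjugate module with the dual -/
  perfect : ∀ φ : V.E →ₗ[ℂ] ↥(coinv A H π), (∀ b e, φ (b • e) = b * φ e) →
    ∃! f : V.E, ∀ e, φ e = h e f
  /-- covariance of the metric: `Δ(h(e,f)) = e₍₋₁₎ f₍₋₁₎^* ⊗ h(e₍₀₎, f₍₀₎)` -/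
  covariant : ∀ (e f : V.E) (l₁ l₂ : List (A × V.E)),
    V.coact e = (l₁.map fun p => p.1 ⊗ₜ p.2).sum →
    V.coact f = (l₂.map fun p => p.1 ⊗ₜ p.2).sum →
    Coalgebra.comul (R := ℂ) ((h e f : A)) =
      (l₁.map fun p => (l₂.map fun q => (p.1 * star q.1) ⊗ₜ[ℂ] ((h p.2 q.2 : A))).sum).sum

/-- `C` is the Chern connection of `(E, h, ∂̄_E)`: it is the unique Hermitian connection
whose `(0,1)`-part is `∂̄_E`. -/
def IsChern (V : VecBundle K) (hm : HermMetric V) (C0 : Conn01 V) (C : Conn1 V) : Prop :=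
  (∀ e, projAct V 0 1 (C.D e) = C0.D e) ∧
  (∀ f g : V.E, ∃ l₁ l₂ : List (K.Om × V.E),
    (l₁.map fun p => mkT V (p.1 ⊗ₜ p.2)).sum = C.D f ∧
    (l₂.map fun p => mkT V (p.1 ⊗ₜ p.2)).sum = C.D g ∧
    K.d (K.incl (hm.h f g)) =
      (l₁.map fun p => p.1 * K.incl (hm.h g p.2)).sum +
      (l₂.map fun p => K.incl (hm.h p.2 f) * K.ostar p.1).sum)

/-- `CurvEq V D e x` expresses that the curvature `∇²` of the connection `D` satisfies
`∇²(e) = x`, via `∇²(e) = Σ dωᵢ ⊗ eᵢ - ωᵢ ∧ ∇eᵢ` for any representation `∇e = Σ ωᵢ ⊗ eᵢ`. -/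
def CurvEq (V : VecBundle K) (D : V.E →ₗ[ℂ] TB V) (e : V.E) (x : TB V) : Prop :=
  ∀ l : List (K.Om × V.E),
    (l.map fun p => mkT V (p.1 ⊗ₜ p.2)).sum = D e →
    x = (l.map fun p => mkT V ((K.d p.1) ⊗ₜ p.2) - omAct V p.1 (D p.2)).sum

/-- Flatness of a `(0,1)`-connection (`∂̄_E² = 0`), i.e. `∂̄_E` is a holomorphic structure. -/
def IsFlatHol (V : VecBundle K) (C0 : Conn01 V) : Prop :=
  ∀ (e : V.E) (l : List (K.Om × V.E)), (∀ p ∈ l, p.1 ∈ K.grade 0 1) →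
    (l.map fun p => mkT V (p.1 ⊗ₜ p.2)).sum = C0.D e →
    (l.map fun p => mkT V ((K.proj 0 2 (K.d p.1)) ⊗ₜ p.2) - omAct V p.1 (C0.D p.2)).sum = 0

/-- Positivity of an Hermitian holomorphic bundle: the Chern connection satisfies
`∇²(e) = -θ i κ ⊗ e` for some `θ > 0`. -/
def IsPositive (V : VecBundle K) (hm : HermMetric V) (C0 : Conn01 V) : Prop :=
  ∃ C : Conn1 V, IsChern V hm C0 C ∧ ∃ θ : ℝ, 0 < θ ∧
    ∀ e, CurvEq V C.D e ((-(θ : ℂ) * Complex.I) • mkT V (K.σ ⊗ₜ e))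

/-- Negativity: the Chern connection satisfies `∇²(e) = θ i κ ⊗ e` for some `θ > 0`. -/
def IsNegative (V : VecBundle K) (hm : HermMetric V) (C0 : Conn01 V) : Prop :=
  ∃ C : Conn1 V, IsChern V hm C0 C ∧ ∃ θ : ℝ, 0 < θ ∧
    ∀ e, CurvEq V C.D e (((θ : ℂ) * Complex.I) • mkT V (K.σ ⊗ₜ e))

/-- Flatness: the Chern connection has vanishing curvature. -/
def IsFlatCurv (V : VecBundle K) (hm : HermMetric V) (C0 : Conn01 V) : Prop :=
  ∃ C : Conn1 V, IsChern V hm C0 C ∧ ∀ e, CurvEq V C.D e 0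

variable (K)

/-- Irreducibility of `Ω^{(a,b)}` as an object of `^A_B mod₀`. -/
def IrreducibleGrade (a b : ℕ) : Prop :=
  K.grade a b ≠ ⊥ ∧
  ∀ N : Submodule ℂ K.Om, N ≤ K.grade a b →
    (∀ c : ↥(coinv A H π), ∀ ω ∈ N, K.incl c * ω ∈ N ∧ ω * K.incl c ∈ N) →
    (∀ ω ∈ N, K.coact ω ∈
      LinearMap.range (TensorProduct.map (LinearMap.id (M := A)) N.subtype)) →
    N = ⊥ ∨ N = K.grade a b

/-- The multiplication map `Ω^{(a,0)} ⊗ Ω^{(0,b)} → Ω•`. -/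
def mulMapL (a b : ℕ) : ↥(K.grade a 0) ⊗[ℂ] ↥(K.grade 0 b) →ₗ[ℂ] K.Om :=
  TensorProduct.lift (((LinearMap.mul ℂ K.Om).comp (K.grade a 0).subtype).compl₂
    (K.grade 0 b).subtype)

/-- The multiplication map `Ω^{(0,b)} ⊗ Ω^{(a,0)} → Ω•`. -/
def mulMapR (a b : ℕ) : ↥(K.grade 0 b) ⊗[ℂ] ↥(K.grade a 0) →ₗ[ℂ] K.Om :=
  TensorProduct.lift (((LinearMap.mul ℂ K.Om).comp (K.grade 0 b).subtype).compl₂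
    (K.grade a 0).subtype)

/-- The `B`-balancing relations in `Ω^{(a,0)} ⊗_ℂ Ω^{(0,b)}`. -/
def balL (a b : ℕ) : Submodule ℂ (↥(K.grade a 0) ⊗[ℂ] ↥(K.grade 0 b)) :=
  Submodule.span ℂ {x | ∃ (ω : ↥(K.grade a 0)) (c : ↥(coinv A H π)) (ν : ↥(K.grade 0 b))
    (h₁ : (ω : K.Om) * K.incl c ∈ K.grade a 0) (h₂ : K.incl c * (ν : K.Om) ∈ K.grade 0 b),
    x = (⟨(ω : K.Om) * K.incl c, h₁⟩ : ↥(K.grade a 0)) ⊗ₜ ν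
      - ω ⊗ₜ (⟨K.incl c * (ν : K.Om), h₂⟩ : ↥(K.grade 0 b))}

/-- The `B`-balancing relations in `Ω^{(0,b)} ⊗_ℂ Ω^{(a,0)}`. -/
def balR (a b : ℕ) : Submodule ℂ (↥(K.grade 0 b) ⊗[ℂ] ↥(K.grade a 0)) :=
  Submodule.span ℂ {x | ∃ (ν : ↥(K.grade 0 b)) (c : ↥(coinv A H π)) (ω : ↥(K.grade a 0))
    (h₁ : (ν : K.Om) * K.incl c ∈ K.grade 0 b) (h₂ : K.incl c * (ω : K.Om) ∈ K.grade a 0),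
    x = (⟨(ν : K.Om) * K.incl c, h₁⟩ : ↥(K.grade 0 b)) ⊗ₜ ω
      - ν ⊗ₜ (⟨K.incl c * (ω : K.Om), h₂⟩ : ↥(K.grade a 0))}

/-- Factorisability of the complex structure:  the wedge maps
`Ω^{(a,0)} ⊗_B Ω^{(0,b)} → Ω^{(a,b)}` and `Ω^{(0,b)} ⊗_B Ω^{(a,0)} → Ω^{(a,b)}`
are isomorphisms of `B`-bimodules. -/
def Factorisable : Prop :=
  ∀ a b : ℕ,
    LinearMap.range (mulMapL K a b) = K.grade a b ∧
    LinearMap.ker (mulMapL K a b) = balL K a b ∧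
    LinearMap.range (mulMapR K a b) = K.grade a b ∧
    LinearMap.ker (mulMapR K a b) = balR K a b


variable {A : Type} [Ring A] [HopfAlgebra ℂ A] [StarRing A]
variable {H : Type} [Ring H] [HopfAlgebra ℂ H] [StarRing H]
variable {π : A →ₐc[ℂ] H}

/-! The Weil formula applied to the primitive form `1` gives `∗_σ(σ^j) = (j!/(n-j)!) σ^{n-j}`,
hence `σ ∧ ∗_σ σ = n ∗_σ 1` and `Λ σ = n`. A positive, negative or flat bundle has curvature
`∇²e = c σ ⊗ e` with `c ∈ iℝ`, so `Λ_F ∇² e = c n e`. -/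

namespace CQH

variable (K : CQH A H π)

lemma one_mem_grade_zero_zero : (1 : K.Om) ∈ K.grade 0 0 :=
  (K.incl_range 1).mpr ⟨1, map_one _⟩

lemma sigma_pow_mem_grade (k : ℕ) : K.σ ^ k ∈ K.grade k k := by
  induction k with
  | zero => simpa using K.one_mem_grade_zero_zero
  | succ m ih => simpa [pow_succ] using K.grade_mul m m 1 1 _ _ ih K.σ_grade

lemma sigma_pow_succ_n : K.σ ^ (K.n + 1) = 0 := by
  have hbot : K.grade (K.n + 1) (K.n + 1) = ⊥ := K.grade_bot _ _ (by omega)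
  simpa [hbot] using K.sigma_pow_mem_grade (K.n + 1)

lemma hodgeEquiv_symm_hodge (x : K.Om) : K.hodgeEquiv.symm (K.hodge x) = x :=
  K.hodgeEquiv.symm_apply_apply x

lemma hodge_sigma_pow {j : ℕ} (hj : j ≤ K.n) :
    K.hodge (K.σ ^ j) = ((j.factorial : ℂ) / ((K.n - j).factorial : ℂ)) • K.σ ^ (K.n - j) := by
  have hprim : K.σ ^ (K.n - (0 + 0) + 1) * 1 = 0 := by simpa using K.sigma_pow_succ_n
  simpa using K.hodge_weil 0 0 j 1 K.one_mem_grade_zero_zero (by omega) hprim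

lemma sigma_mul_hodge_sigma : K.σ * K.hodge K.σ = (K.n : ℂ) • K.hodge 1 := by
  have hn := K.npos
  have hσ : K.hodge K.σ = (1 / ((K.n - 1).factorial : ℂ)) • K.σ ^ (K.n - 1) := by
    simpa using K.hodge_sigma_pow hn
  have h1 : K.hodge 1 = (1 / (K.n.factorial : ℂ)) • K.σ ^ K.n := by
    simpa using K.hodge_sigma_pow (Nat.zero_le _)
  have hfac : (K.n.factorial : ℂ) = K.n * (K.n - 1).factorial := by
    exact_mod_cast (Nat.mul_factorial_pred hn.ne').symm
  have hn' : (K.n : ℂ) ≠ 0 := by exact_mod_cast hn.ne'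
  rw [hσ, h1, mul_smul_comm, ← pow_succ', Nat.sub_add_cancel hn, smul_smul, hfac]
  field_simp

lemma lam_sigma : K.lam K.σ = (K.n : ℂ) • 1 := by
  rw [lam_apply, sigma_mul_hodge_sigma, ← map_smul, hodgeEquiv_symm_hodge]

end CQH

section

variable {K : CQH A H π} {V : VecBundle K}

lemma exists_list_sum_mkT (y : TB V) :
    ∃ l : List (K.Om × V.E), (l.map fun p => mkT V (p.1 ⊗ₜ p.2)).sum = y := by
  obtain ⟨t, rfl⟩ : ∃ t, mkT V t = y := Submodule.mkQ_surjective (bal V) y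
  obtain ⟨S, rfl⟩ := TensorProduct.exists_multiset t
  obtain ⟨l, rfl⟩ := Quot.exists_rep S
  refine ⟨l, ?_⟩
  simp only [Multiset.quot_mk_to_coe'', Multiset.map_coe, Multiset.sum_coe, map_list_sum,
    List.map_map]
  rfl

lemma CurvEq.unique {D : V.E →ₗ[ℂ] TB V} {e : V.E} {x y : TB V}
    (hx : CurvEq V D e x) (hy : CurvEq V D e y) : x = y := by
  obtain ⟨l, hl⟩ := exists_list_sum_mkT (D e)
  rw [hx l hl, hy l hl]

lemma lamAct_mkT (ω : K.Om) (e : V.E) :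
    lamAct V (mkT V (ω ⊗ₜ e)) = mkT V (K.lam ω ⊗ₜ e) :=
  rfl

lemma lamAct_mkT_sigma (e : V.E) :
    lamAct V (mkT V (K.σ ⊗ₜ e)) = (K.n : ℂ) • mkT V ((1 : K.Om) ⊗ₜ e) := by
  rw [lamAct_mkT, K.lam_sigma, ← TensorProduct.smul_tmul', map_smul]

lemma hermite_einstein_of_curvEq_smul_sigma {D : V.E →ₗ[ℂ] TB V} (θ : ℝ)
    (hcurv : ∀ e, CurvEq V D e (((θ : ℂ) * Complex.I) • mkT V (K.σ ⊗ₜ e))) :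
    ∃ γ : ℝ, ∀ (e : V.E) (x : TB V), CurvEq V D e x →
      lamAct V x = ((γ : ℂ) * Complex.I) • mkT V ((1 : K.Om) ⊗ₜ e) := by
  refine ⟨θ * K.n, fun e x hx => ?_⟩
  rw [hx.unique (hcurv e), map_smul, lamAct_mkT_sigma, smul_smul]
  push_cast
  ring_nf

end

theorem hermite_einstein_of_positive_negative_or_flat_general
    (K : CQH A H π)
    (V : VecBundle K)
    (C : Conn1 V)
    (hsign :
      (∃ θ : ℝ, 0 < θ ∧
        ∀ e, CurvEq V C.D e ((-(θ : ℂ) * Complex.I) • mkT V (K.σ ⊗ₜ e))) ∨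
      (∃ θ : ℝ, 0 < θ ∧
        ∀ e, CurvEq V C.D e (((θ : ℂ) * Complex.I) • mkT V (K.σ ⊗ₜ e))) ∨
      (∀ e, CurvEq V C.D e 0)) :
    ∃ γ : ℝ, ∀ (e : V.E) (x : TB V), CurvEq V C.D e x →
      lamAct V x = ((γ : ℂ) * Complex.I) • mkT V ((1 : K.Om) ⊗ₜ e) := by
  rcases hsign with ⟨θ, -, hcurv⟩ | ⟨θ, -, hcurv⟩ | hcurv
  · exact hermite_einstein_of_curvEq_smul_sigma (-θ) (by simpa using hcurv)
  · exact hermite_einstein_of_curvEq_smul_sigma θ hcurv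
  · exact hermite_einstein_of_curvEq_smul_sigma 0 (by simpa using hcurv)

/-- §3.2.  Any positive, negative, or flat Hermitian holomorphic
vector bundle `(F, h, ∂̄_F)` over a factorisable irreducible CQH-Kähler space is
Hermite–Einstein: its Chern connection `∇` satisfies `Λ_F ∘ ∇² = γ i id_F` for some
`γ ∈ ℝ`, where `Λ_F = Λ ⊗ id_F`. -/
theorem hermite_einstein_of_positive_negative_or_flat
    (K : CQH A H π) (hk : K.d K.σ = 0)
    (hfac : Factorisable K) (hirr : IrreducibleGrade K 0 1)
    (V : VecBundle K) (hm : HermMetric V)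
    (C0 : Conn01 V) (hflat : IsFlatHol V C0)
    (C : Conn1 V) (hC : IsChern V hm C0 C)
    (hsign :
      (∃ θ : ℝ, 0 < θ ∧
        ∀ e, CurvEq V C.D e ((-(θ : ℂ) * Complex.I) • mkT V (K.σ ⊗ₜ e))) ∨
      (∃ θ : ℝ, 0 < θ ∧
        ∀ e, CurvEq V C.D e (((θ : ℂ) * Complex.I) • mkT V (K.σ ⊗ₜ e))) ∨
      (∀ e, CurvEq V C.D e 0)) :
    ∃ γ : ℝ, ∀ (e : V.E) (x : TB V), CurvEq V C.D e x →
      lamAct V x = ((γ : ℂ) * Complex.I) • mkT V ((1 : K.Om) ⊗ₜ e) :=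
  hermite_einstein_of_positive_negative_or_flat_general K V C hsign

end NCK
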